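/- arXiv:1304.2220 — 2 statements merged into one kernel-verified Lean document; each statement's English description precedes it below -/
import Mathlib

section
/- Let F : ℝ² → ℝ² be a C² diffeomorphism given in null coordinates by F(u,v) = (σ(u,v), τ(u,v)). Suppose that for every monomial θ ∈ {σ, τ, σ², τ²} (as functions of (u,v)), ∂²θ/∂v∂u = 0. Then there exist continuous functions f, h : ℝ → ℝ and C¹ functions g, j : ℝ → ℝ with σ(u,v) = ∫₀ᵘ f(s) ds + g(v), τ(u,v) = ∫₀ᵘ h(s) ds + j(v), together with f(u)·g'(v) = 0 and h(u)·j'(v) = 0 for all u, v. -/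
/-- Partial derivative in the first variable. -/
noncomputable def pd1 (f : ℝ × ℝ → ℝ) (p : ℝ × ℝ) : ℝ := deriv (fun x => f (x, p.2)) p.1

/-- Partial derivative in the second variable. -/
noncomputable def pd2 (f : ℝ × ℝ → ℝ) (p : ℝ × ℝ) : ℝ := deriv (fun y => f (p.1, y)) p.2

/-!
Since `∂ᵥ∂ᵤσ = 0`, the partial `∂ᵤσ(u, v) = f(u)` does not depend on `v`, so integrating in `u`
gives `σ(u, v) = ∫₀ᵘ f + g(v)` with `g(v) = σ(0, v)`. Then `∂ᵤ(σ²) = 2 f(u) σ(u, v)`, and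
`∂ᵥ∂ᵤ(σ²) = 2 f(u) g'(v)`, whose vanishing is the product condition. The same argument applies to `τ`.
-/

section Partials

variable {σ : ℝ × ℝ → ℝ}

lemma hasDerivAt_pd1 (hσ : Differentiable ℝ σ) (u v : ℝ) :
    HasDerivAt (fun x => σ (x, v)) (pd1 σ (u, v)) u :=
  (hσ.comp (differentiable_id.prodMk (differentiable_const v)) u).hasDerivAt

lemma pd1_eq_fderiv (hσ : Differentiable ℝ σ) : pd1 σ = fun p => fderiv ℝ σ p (1, 0) := by
  funext p
  exact ((hσ p).hasFDerivAt.comp_hasDerivAt p.1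
    ((hasDerivAt_id p.1).prodMk (hasDerivAt_const p.1 p.2))).deriv

lemma ContDiff.pd1 {n : WithTop ℕ∞} (hσ : ContDiff ℝ (n + 1) σ) : ContDiff ℝ n (pd1 σ) := by
  rw [pd1_eq_fderiv (hσ.differentiable (by simp))]
  exact (ContinuousLinearMap.apply ℝ ℝ ((1 : ℝ), (0 : ℝ))).contDiff.comp (hσ.fderiv_right le_rfl)

lemma pd1_sq (hσ : Differentiable ℝ σ) (p : ℝ × ℝ) :
    pd1 (fun q => σ q ^ 2) p = 2 * σ p * pd1 σ p := by
  rw [pd1, ((hasDerivAt_pd1 hσ p.1 p.2).fun_pow 2).deriv]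
  ring

lemma eq_of_pd2_eq_zero (hσ : Differentiable ℝ σ) (h : ∀ p, pd2 σ p = 0) (u v w : ℝ) :
    σ (u, v) = σ (u, w) :=
  is_const_of_deriv_eq_zero (hσ.comp ((differentiable_const u).prodMk differentiable_id))
    (fun y => h (u, y)) v w

lemma eq_integral_add_of_pd1_eq {f : ℝ → ℝ} (hσ : Differentiable ℝ σ) (hf : Continuous f)
    (hσf : ∀ u v, pd1 σ (u, v) = f u) (a u v : ℝ) :
    σ (u, v) = (∫ s in a..u, f s) + σ (a, v) := by
  rw [intervalIntegral.integral_eq_sub_of_hasDerivAt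
    (fun t _ => hσf t v ▸ hasDerivAt_pd1 hσ t v) (hf.intervalIntegrable a u)]
  ring

theorem exists_split_of_pd2_pd1_eq_zero (hσ : ContDiff ℝ 2 σ)
    (h : ∀ p, pd2 (pd1 σ) p = 0) (hsq : ∀ p, pd2 (pd1 fun q => σ q ^ 2) p = 0) :
    ∃ f g : ℝ → ℝ, Continuous f ∧ ContDiff ℝ 1 g ∧
      (∀ u v, σ (u, v) = (∫ s in (0 : ℝ)..u, f s) + g v) ∧ ∀ u v, f u * deriv g v = 0 := by
  have hσd : Differentiable ℝ σ := hσ.differentiable (by simp)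
  have hσ₁ : ContDiff ℝ 1 (pd1 σ) := hσ.pd1
  set f : ℝ → ℝ := fun u => pd1 σ (u, 0)
  set g : ℝ → ℝ := fun v => σ (0, v)
  have hf : Continuous f := hσ₁.continuous.comp (continuous_id.prodMk continuous_const)
  have hg : ContDiff ℝ 1 g := (hσ.of_le (by norm_num)).comp (contDiff_const.prodMk contDiff_id)
  have hσf : ∀ u v, pd1 σ (u, v) = f u :=
    fun u v => eq_of_pd2_eq_zero (hσ₁.differentiable one_ne_zero) h u v 0
  have hsplit : ∀ u v, σ (u, v) = (∫ s in (0 : ℝ)..u, f s) + g v :=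
    eq_integral_add_of_pd1_eq hσd hf hσf 0
  refine ⟨f, g, hf, hg, hsplit, fun u v => ?_⟩
  have hpd1_sq : (fun y => pd1 (fun q => σ q ^ 2) (u, y)) =
      fun y => 2 * f u * ((∫ s in (0 : ℝ)..u, f s) + g y) := by
    funext y
    rw [pd1_sq hσd, hσf, hsplit]
    ring
  have hzero := hsq (u, v)
  rw [pd2, hpd1_sq, deriv_const_mul _ ((hg.differentiable one_ne_zero).const_add _ v),
    deriv_const_add] at hzero
  linarith

end Partials

theorem split_form_of_monomial_mixed_partials_zero_general
    (σ τ : ℝ × ℝ → ℝ)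
    (hσ : ContDiff ℝ 2 σ) (hτ : ContDiff ℝ 2 τ)
    (h1 : ∀ p : ℝ × ℝ, pd2 (pd1 σ) p = 0)
    (h2 : ∀ p : ℝ × ℝ, pd2 (pd1 τ) p = 0)
    (h3 : ∀ p : ℝ × ℝ, pd2 (pd1 (fun q => σ q ^ 2)) p = 0)
    (h4 : ∀ p : ℝ × ℝ, pd2 (pd1 (fun q => τ q ^ 2)) p = 0) :
    ∃ f h : ℝ → ℝ, ∃ g j : ℝ → ℝ,
      Continuous f ∧ Continuous h ∧ ContDiff ℝ 1 g ∧ ContDiff ℝ 1 j ∧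
      (∀ u v : ℝ, σ (u, v) = (∫ s in (0:ℝ)..u, f s) + g v) ∧
      (∀ u v : ℝ, τ (u, v) = (∫ s in (0:ℝ)..u, h s) + j v) ∧
      (∀ u v : ℝ, f u * deriv g v = 0) ∧
      (∀ u v : ℝ, h u * deriv j v = 0) := by
  obtain ⟨f, g, hf, hg, hσ_split, hfg⟩ := exists_split_of_pd2_pd1_eq_zero hσ h1 h3
  obtain ⟨h, j, hh, hj, hτ_split, hhj⟩ := exists_split_of_pd2_pd1_eq_zero hτ h2 h4
  exact ⟨f, h, g, j, hf, hh, hg, hj, hσ_split, hτ_split, hfg, hhj⟩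

/-- If all mixed partials ∂²θ/∂v∂u vanish for θ ∈ {σ, τ, σ², τ²}, where
(σ,τ) is a C² diffeomorphism of the plane, then σ and τ split as
`∫₀ᵘ f + g(v)` and `∫₀ᵘ h + j(v)` with `f·g' ≡ 0` and `h·j' ≡ 0`. -/
theorem split_form_of_monomial_mixed_partials_zero
    (σ τ : ℝ × ℝ → ℝ)
    (hσ : ContDiff ℝ 2 σ) (hτ : ContDiff ℝ 2 τ)
    (hFb : Function.Bijective (fun p : ℝ × ℝ => (σ p, τ p)))
    (hFinv : ∃ G : ℝ × ℝ → ℝ × ℝ, ContDiff ℝ 2 G ∧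
      Function.LeftInverse G (fun p : ℝ × ℝ => (σ p, τ p)) ∧
      Function.RightInverse G (fun p : ℝ × ℝ => (σ p, τ p)))
    (h1 : ∀ p : ℝ × ℝ, pd2 (pd1 σ) p = 0)
    (h2 : ∀ p : ℝ × ℝ, pd2 (pd1 τ) p = 0)
    (h3 : ∀ p : ℝ × ℝ, pd2 (pd1 (fun q => σ q ^ 2)) p = 0)
    (h4 : ∀ p : ℝ × ℝ, pd2 (pd1 (fun q => τ q ^ 2)) p = 0) :
    ∃ f h : ℝ → ℝ, ∃ g j : ℝ → ℝ,
      Continuous f ∧ Continuous h ∧ ContDiff ℝ 1 g ∧ ContDiff ℝ 1 j ∧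
      (∀ u v : ℝ, σ (u, v) = (∫ s in (0:ℝ)..u, f s) + g v) ∧
      (∀ u v : ℝ, τ (u, v) = (∫ s in (0:ℝ)..u, h s) + j v) ∧
      (∀ u v : ℝ, f u * deriv g v = 0) ∧
      (∀ u v : ℝ, h u * deriv j v = 0) :=
  split_form_of_monomial_mixed_partials_zero_general σ τ hσ hτ h1 h2 h3 h4
end

section
/- Let F(u,v) = (σ(u,v), τ(u,v)) be a C² map of ℝ² such that for every C² function θ : ℝ² → ℝ with θ_στ ≡ 0 one has (θ∘F)_{uv} ≡ 0. Then σ_{uv} ≡ 0, τ_{uv} ≡ 0, σ_u σ_v ≡ 0, and τ_u τ_v ≡ 0. -/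
lemma pd1_eq_fderiv_s14 {f : ℝ × ℝ → ℝ} {p : ℝ × ℝ} (hf : DifferentiableAt ℝ f p) :
    pd1 f p = fderiv ℝ f p (1, 0) :=
  (hf.hasFDerivAt.comp_hasDerivAt p.1
    ((hasDerivAt_id p.1).prodMk (hasDerivAt_const p.1 p.2))).deriv

lemma contDiff_pd1 {n : WithTop ℕ∞} {f : ℝ × ℝ → ℝ} (hf : ContDiff ℝ (n + 1) f) :
    ContDiff ℝ n (pd1 f) := by
  have hD : Differentiable ℝ f := hf.differentiable (by simp)
  rw [show pd1 f = fun p => fderiv ℝ f p (1, 0) from funext fun p => pd1_eq_fderiv_s14 (hD p)]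
  exact (hf.fderiv_right le_rfl).clm_apply contDiff_const

lemma DifferentiableAt.slice_fst {f : ℝ × ℝ → ℝ} {p : ℝ × ℝ} (hf : DifferentiableAt ℝ f p) :
    DifferentiableAt ℝ (fun x => f (x, p.2)) p.1 :=
  hf.comp p.1 (differentiableAt_id.prodMk (differentiableAt_const p.2))

lemma DifferentiableAt.slice_snd {f : ℝ × ℝ → ℝ} {p : ℝ × ℝ} (hf : DifferentiableAt ℝ f p) :
    DifferentiableAt ℝ (fun y => f (p.1, y)) p.2 :=
  hf.comp p.2 ((differentiableAt_const p.1).prodMk differentiableAt_id)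

section Leibniz

variable {f g : ℝ × ℝ → ℝ} {p : ℝ × ℝ}

lemma pd1_mul (hf : DifferentiableAt ℝ f p) (hg : DifferentiableAt ℝ g p) :
    pd1 (fun q => f q * g q) p = pd1 f p * g p + f p * pd1 g p :=
  deriv_mul hf.slice_fst hg.slice_fst

lemma pd2_add (hf : DifferentiableAt ℝ f p) (hg : DifferentiableAt ℝ g p) :
    pd2 (fun q => f q + g q) p = pd2 f p + pd2 g p :=
  deriv_add hf.slice_snd hg.slice_snd

lemma pd2_mul (hf : DifferentiableAt ℝ f p) (hg : DifferentiableAt ℝ g p) :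
    pd2 (fun q => f q * g q) p = pd2 f p * g p + f p * pd2 g p :=
  deriv_mul hf.slice_snd hg.slice_snd

lemma pd2_pd1_mul (hf : ContDiff ℝ 2 f) (hg : ContDiff ℝ 2 g) :
    pd2 (pd1 (fun q => f q * g q)) p =
      pd2 (pd1 f) p * g p + pd1 f p * pd2 g p + pd2 f p * pd1 g p + f p * pd2 (pd1 g) p := by
  have Df : Differentiable ℝ f := hf.differentiable two_ne_zero
  have Dg : Differentiable ℝ g := hg.differentiable two_ne_zero
  have Df1 : Differentiable ℝ (pd1 f) := (contDiff_pd1 hf).differentiable one_ne_zero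
  have Dg1 : Differentiable ℝ (pd1 g) := (contDiff_pd1 hg).differentiable one_ne_zero
  rw [show pd1 (fun q => f q * g q) = fun q => pd1 f q * g q + f q * pd1 g q from
      funext fun q => pd1_mul (Df q) (Dg q),
    pd2_add (f := fun q => pd1 f q * g q) (g := fun q => f q * pd1 g q)
      ((Df1 p).mul (Dg p)) ((Df p).mul (Dg1 p)), pd2_mul (Df1 p) (Dg p),
    pd2_mul (Df p) (Dg1 p)]
  ring

end Leibniz

lemma pd2_pd1_comp_fst (φ : ℝ → ℝ) (p : ℝ × ℝ) : pd2 (pd1 (fun q => φ q.1)) p = 0 := by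
  simp [pd1, pd2]

lemma pd2_pd1_comp_snd (φ : ℝ → ℝ) (p : ℝ × ℝ) : pd2 (pd1 (fun q => φ q.2)) p = 0 := by
  simp [pd1, pd2]

lemma pd1_mul_pd2_eq_zero {g : ℝ × ℝ → ℝ} (hg : ContDiff ℝ 2 g)
    (hmix : ∀ p, pd2 (pd1 g) p = 0) (hsq : ∀ p, pd2 (pd1 (fun q => g q * g q)) p = 0)
    (p : ℝ × ℝ) : pd1 g p * pd2 g p = 0 := by
  have h := hsq p
  rw [pd2_pd1_mul hg hg, hmix p] at h
  linarith

/-- If θ∘F has vanishing mixed partial whenever θ does, then the components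
of F have vanishing mixed partials and `σ_u σ_v ≡ 0`, `τ_u τ_v ≡ 0`. -/
theorem components_conditions_of_wave_invariance
    (σ τ : ℝ × ℝ → ℝ) (hσ : ContDiff ℝ 2 σ) (hτ : ContDiff ℝ 2 τ)
    (F : ℝ × ℝ → ℝ × ℝ) (hF : ∀ p, F p = (σ p, τ p))
    (hinv : ∀ θ : ℝ × ℝ → ℝ, ContDiff ℝ 2 θ →
      (∀ p : ℝ × ℝ, pd2 (pd1 θ) p = 0) →
      (∀ p : ℝ × ℝ, pd2 (pd1 (θ ∘ F)) p = 0)) :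
    (∀ p : ℝ × ℝ, pd2 (pd1 σ) p = 0) ∧
    (∀ p : ℝ × ℝ, pd2 (pd1 τ) p = 0) ∧
    (∀ p : ℝ × ℝ, pd1 σ p * pd2 σ p = 0) ∧
    (∀ p : ℝ × ℝ, pd1 τ p * pd2 τ p = 0) := by
  have hσcomp : ∀ φ : ℝ → ℝ, ContDiff ℝ 2 φ → ∀ p, pd2 (pd1 (fun q => φ (σ q))) p = 0 := by
    intro φ hφ
    simpa [Function.comp_def, hF] using
      hinv (fun q => φ q.1) (hφ.comp contDiff_fst) (pd2_pd1_comp_fst φ)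
  have hτcomp : ∀ φ : ℝ → ℝ, ContDiff ℝ 2 φ → ∀ p, pd2 (pd1 (fun q => φ (τ q))) p = 0 := by
    intro φ hφ
    simpa [Function.comp_def, hF] using
      hinv (fun q => φ q.2) (hφ.comp contDiff_snd) (pd2_pd1_comp_snd φ)
  have hσmix := hσcomp id contDiff_id
  have hτmix := hτcomp id contDiff_id
  have hsq : ContDiff ℝ 2 fun x : ℝ => x * x := contDiff_id.mul contDiff_id
  exact ⟨hσmix, hτmix, pd1_mul_pd2_eq_zero hσ hσmix (hσcomp _ hsq),
    pd1_mul_pd2_eq_zero hτ hτmix (hτcomp _ hsq)⟩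
end
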